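/- As λ → 0⁺, the unique solution p_λ of the dual problem D_λ(y) converges strongly in L²(T) to p₀, the minimal L²-norm solution of the limit dual problem D₀(y); consequently the certificates η_λ = Φ*p_λ and their first and second derivatives converge uniformly to η₀ = Φ*p₀ and its derivatives. -/

import Mathlib

open MeasureTheory

attribute [local instance] ZeroLEOneClass.factZeroLtOne

noncomputable section

/-- The torus `T = ℝ/ℤ`. -/
abbrev 𝕋 := AddCircle (1 : ℝ)

/-- Integral `∫ f dm` of a function against a (finite) signed Radon measure on the torus. -/
def sInt (m : SignedMeasure 𝕋) (f : 𝕋 → ℝ) : ℝ :=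
  ∫ x, f x ∂m.toJordanDecomposition.posPart - ∫ x, f x ∂m.toJordanDecomposition.negPart

/-- The total variation norm `‖m‖_TV = sup { ∫ ψ dm : ψ ∈ C(𝕋), ‖ψ‖_∞ ≤ 1 }`. -/
def tv (m : SignedMeasure 𝕋) : ℝ :=
  sSup { r | ∃ ψ : C(𝕋, ℝ), ‖ψ‖ ≤ 1 ∧ r = sInt m ψ }

/-- The lift of a function on the torus to a `1`-periodic function on `ℝ`. -/
def lift (f : 𝕋 → ℝ) : ℝ → ℝ := fun s => f (s : 𝕋)

/-- The convolution operator `Φ : M(𝕋) → L²(𝕋)`, `(Φm)(t) = ∫ φ(x − t) dm(x)`. -/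
def Phi (φ : 𝕋 → ℝ) (m : SignedMeasure 𝕋) : 𝕋 → ℝ := fun t => sInt m (fun x => φ (x - t))

/-- The adjoint operator `Φ* : L²(𝕋) → C(𝕋)`, `(Φ*p)(t) = ∫ φ(t − x) p(x) dx`. -/
def PhiStar (φ : 𝕋 → ℝ) (p : 𝕋 → ℝ) : 𝕋 → ℝ := fun t => ∫ x, φ (t - x) * p x

/-- The `L²(𝕋)` norm of a function. -/
def L2norm (p : 𝕋 → ℝ) : ℝ := Real.sqrt (∫ t, (p t) ^ 2)

/-- The `L²(𝕋)` inner product. -/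
def dotL2 (y p : 𝕋 → ℝ) : ℝ := ∫ t, y t * p t

/-- `p` is admissible for the dual problems: `p ∈ L²` and `‖Φ*p‖_∞ ≤ 1`. -/
def DualAdm (φ : 𝕋 → ℝ) (p : 𝕋 → ℝ) : Prop :=
  MemLp p 2 volume ∧ ∀ t : 𝕋, |PhiStar φ p t| ≤ 1


/-- The dual objective of `D_λ(y)`: `⟨y,p⟩ − (λ/2)‖p‖²`. -/
def dualObj (lam : ℝ) (y : 𝕋 → ℝ) (p : 𝕋 → ℝ) : ℝ :=
  dotL2 y p - (lam / 2) * ∫ t, (p t) ^ 2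

/-- `p` solves the dual problem `D_λ(y)`. -/
def SolvesDual (φ : 𝕋 → ℝ) (lam : ℝ) (y : 𝕋 → ℝ) (p : 𝕋 → ℝ) : Prop :=
  DualAdm φ p ∧ ∀ q, DualAdm φ q → dualObj lam y q ≤ dualObj lam y p

/-- `p₀` is the minimal `L²`-norm solution of the limit dual problem `D₀(y)`. -/
def MinNormSol (φ : 𝕋 → ℝ) (y : 𝕋 → ℝ) (p₀ : 𝕋 → ℝ) : Prop :=
  DualAdm φ p₀ ∧ (∀ q, DualAdm φ q → dotL2 y q ≤ dotL2 y p₀) ∧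
    ∀ q, DualAdm φ q → dotL2 y q = dotL2 y p₀ → L2norm p₀ ≤ L2norm q

/-!
In `L²(𝕋)` the dual solution `p_λ` maximizes `⟪y, ·⟫ - λ/2 ‖·‖²` over the closed convex feasible
set `C`, and `p₀` maximizes the same objective with `λ = 0`. Comparing the optimality of two
parameters `l < m` shows that `‖p_λ‖` increases as `λ ↓ 0`; combined with the first-order condition
at `p_m` it gives `‖p_l - p_m‖² ≤ ‖p_l‖² - ‖p_m‖²`, also for `l = 0`. Hence `p_λ` is Cauchy as
`λ → 0⁺`. Its limit lies in `C`, maximizes `⟪y, ·⟫` and has norm at most `‖p₀‖`, so the estimate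
with `l = 0` forces it to be `p₀`. The derivatives of `Φ*p` are `Φ*p` with `φ` replaced by its
derivatives, and convolution with a continuous kernel maps `L²` boundedly into the continuous
functions with the sup norm.
-/

open Filter Topology Set
open scoped RealInnerProductSpace

lemma cauchy_map_of_dist_sq_le {α β : Type*} [PseudoMetricSpace β] {F : Filter α} [F.NeBot]
    {u : α → β} {f : α → ℝ} {s : ℝ} (hf : Tendsto f F (𝓝 s))
    (hu : ∀ᶠ p in F ×ˢ F, dist (u p.1) (u p.2) ^ 2 ≤ dist (f p.1) (f p.2)) :
    Cauchy (map u F) := by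
  have hdist : Tendsto (fun p : α × α => dist (f p.1) (f p.2)) (F ×ˢ F) (𝓝 0) :=
    tendsto_uniformity_iff_dist_tendsto_zero.mp (cauchy_map_iff'.mp hf.cauchy_map)
  rw [cauchy_map_iff', tendsto_uniformity_iff_dist_tendsto_zero]
  refine squeeze_zero' (Eventually.of_forall fun _ => dist_nonneg) ?_
    (by simpa using hdist.sqrt)
  filter_upwards [hu] with p hp using Real.le_sqrt_of_sq_le hp

section RegularizedMaximizer

variable {E : Type*} [NormedAddCommGroup E] [InnerProductSpace ℝ E] {C : Set E} {Y : E}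

def regObjective (Y : E) (lam : ℝ) (v : E) : ℝ := ⟪Y, v⟫ - lam / 2 * ‖v‖ ^ 2

lemma hasFDerivAt_regObjective (Y : E) (lam : ℝ) (u : E) :
    HasFDerivAt (regObjective Y lam) (innerSL ℝ Y - (lam / 2) • 2 • innerSL ℝ u) u :=
  (innerSL ℝ Y).hasFDerivAt.sub ((hasStrictFDerivAt_norm_sq u).hasFDerivAt.const_mul (lam / 2))

lemma inner_sub_le_of_isMaxOn_regObjective (hC : Convex ℝ C) {lam : ℝ} {u q : E}
    (hu : u ∈ C) (hq : q ∈ C) (hmax : IsMaxOn (regObjective Y lam) C u) :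
    ⟪Y, q - u⟫ ≤ lam * ⟪u, q - u⟫ := by
  have h := hmax.localize.hasFDerivWithinAt_nonpos
    (hasFDerivAt_regObjective Y lam u).hasFDerivWithinAt
    (sub_mem_posTangentConeAt_of_segment_subset (hC.segment_subset hu hq))
  simp only [sub_apply, smul_apply, innerSL_apply_apply, smul_eq_mul, nsmul_eq_mul] at h
  linarith

lemma regObjective_zero (Y : E) : regObjective Y 0 = fun v => ⟪Y, v⟫ := by
  ext v; simp [regObjective]

variable {l m : ℝ} {ul um : E}

/-- Adding the two optimality inequalities gives `(m - l) (‖ul‖² - ‖um‖²) ≥ 0`. -/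
lemma norm_le_of_isMaxOn_regObjective (hlm : l < m) (hul : ul ∈ C) (hum : um ∈ C)
    (hmaxl : IsMaxOn (regObjective Y l) C ul) (hmaxm : IsMaxOn (regObjective Y m) C um) :
    ‖um‖ ^ 2 ≤ ‖ul‖ ^ 2 := by
  have h₁ : regObjective Y l um ≤ regObjective Y l ul := hmaxl hum
  have h₂ : regObjective Y m ul ≤ regObjective Y m um := hmaxm hul
  simp only [regObjective] at h₁ h₂
  nlinarith

lemma inner_le_of_isMaxOn_regObjective (hl : 0 ≤ l) (hlm : l < m) (hul : ul ∈ C) (hum : um ∈ C)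
    (hmaxl : IsMaxOn (regObjective Y l) C ul) (hmaxm : IsMaxOn (regObjective Y m) C um) :
    ⟪Y, um⟫ ≤ ⟪Y, ul⟫ := by
  have h₁ : regObjective Y l um ≤ regObjective Y l ul := hmaxl hum
  have h₂ := norm_le_of_isMaxOn_regObjective hlm hul hum hmaxl hmaxm
  simp only [regObjective] at h₁
  nlinarith

lemma norm_sub_sq_le_of_isMaxOn_regObjective (hC : Convex ℝ C) (hl : 0 ≤ l) (hlm : l < m)
    (hul : ul ∈ C) (hum : um ∈ C)
    (hmaxl : IsMaxOn (regObjective Y l) C ul) (hmaxm : IsMaxOn (regObjective Y m) C um) :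
    ‖ul - um‖ ^ 2 ≤ ‖ul‖ ^ 2 - ‖um‖ ^ 2 := by
  have hvar := inner_sub_le_of_isMaxOn_regObjective hC hum hul hmaxm
  have hY := inner_le_of_isMaxOn_regObjective hl hlm hul hum hmaxl hmaxm
  have hangle : 0 ≤ ⟪um, ul - um⟫ := by
    rw [inner_sub_right] at hvar
    nlinarith
  rw [inner_sub_right, real_inner_self_eq_norm_sq] at hangle
  rw [norm_sub_sq_real, real_inner_comm]
  linarith

variable {u : ℝ → E} {u₀ : E}

lemma cauchy_map_isMaxOn_regObjective (hC : Convex ℝ C)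
    (hu : ∀ lam, 0 < lam → u lam ∈ C ∧ IsMaxOn (regObjective Y lam) C (u lam))
    (hu₀ : u₀ ∈ C) (hmax₀ : IsMaxOn (regObjective Y 0) C u₀) :
    Cauchy (map u (𝓝[>] 0)) := by
  have hpos : ∀ᶠ lam in 𝓝[>] (0 : ℝ), 0 < lam := self_mem_nhdsWithin
  have hnorm_anti : AntitoneOn (fun lam => ‖u lam‖ ^ 2) (Ioi 0) := fun l hl m hm hlm => by
    rcases hlm.lt_or_eq with hlm | rfl
    · exact norm_le_of_isMaxOn_regObjective hlm (hu l hl).1 (hu m hm).1 (hu l hl).2 (hu m hm).2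
    · rfl
  have hnorm_bdd : BddAbove ((fun lam => ‖u lam‖ ^ 2) '' Ioi 0) := by
    refine ⟨‖u₀‖ ^ 2, ?_⟩
    rintro _ ⟨lam, hlam, rfl⟩
    exact norm_le_of_isMaxOn_regObjective hlam hu₀ (hu lam hlam).1 hmax₀ (hu lam hlam).2
  refine cauchy_map_of_dist_sq_le (hnorm_anti.tendsto_nhdsGT hnorm_bdd) ?_
  filter_upwards [hpos.prod_inl _, hpos.prod_inr _] with ⟨l, m⟩ hl hm
  rw [dist_eq_norm, Real.dist_eq]
  rcases lt_trichotomy l m with hlm | rfl | hlm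
  · exact (norm_sub_sq_le_of_isMaxOn_regObjective hC hl.le hlm (hu l hl).1 (hu m hm).1
      (hu l hl).2 (hu m hm).2).trans (le_abs_self _)
  · simp
  · rw [norm_sub_rev, abs_sub_comm]
    exact (norm_sub_sq_le_of_isMaxOn_regObjective hC hm.le hlm (hu m hm).1 (hu l hl).1
      (hu m hm).2 (hu l hl).2).trans (le_abs_self _)

lemma inner_le_of_tendsto_isMaxOn_regObjective
    (hu : ∀ lam, 0 < lam → u lam ∈ C ∧ IsMaxOn (regObjective Y lam) C (u lam))
    (hu₀ : u₀ ∈ C) {x : E} (hx : Tendsto u (𝓝[>] 0) (𝓝 x)) : ⟪Y, u₀⟫ ≤ ⟪Y, x⟫ := by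
  have hlim : Tendsto (fun lam : ℝ => ⟪Y, u₀⟫ - lam / 2 * ‖u₀‖ ^ 2) (𝓝[>] 0) (𝓝 ⟪Y, u₀⟫) := by
    have hcont : Continuous fun lam : ℝ => ⟪Y, u₀⟫ - lam / 2 * ‖u₀‖ ^ 2 := by fun_prop
    simpa using (hcont.tendsto 0).mono_left nhdsWithin_le_nhds
  refine le_of_tendsto_of_tendsto hlim (tendsto_const_nhds.inner hx) ?_
  filter_upwards [self_mem_nhdsWithin] with lam (hlam : 0 < lam)
  have h : regObjective Y lam u₀ ≤ regObjective Y lam (u lam) := (hu lam hlam).2 hu₀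
  simp only [regObjective] at h
  nlinarith [sq_nonneg ‖u lam‖]

theorem tendsto_isMaxOn_regObjective [CompleteSpace E] (hC : IsClosed C) (hCc : Convex ℝ C)
    (hu : ∀ lam, 0 < lam → u lam ∈ C ∧ IsMaxOn (regObjective Y lam) C (u lam))
    (hu₀ : u₀ ∈ C) (hmax₀ : IsMaxOn (fun v => ⟪Y, v⟫) C u₀)
    (hmin₀ : ∀ v ∈ C, ⟪Y, v⟫ = ⟪Y, u₀⟫ → ‖u₀‖ ≤ ‖v‖) :
    Tendsto u (𝓝[>] 0) (𝓝 u₀) := by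
  rw [← regObjective_zero] at hmax₀
  obtain ⟨x, hx : Tendsto u (𝓝[>] 0) (𝓝 x)⟩ :=
    CompleteSpace.complete (cauchy_map_isMaxOn_regObjective hCc hu hu₀ hmax₀)
  have hpos : ∀ᶠ lam in 𝓝[>] (0 : ℝ), 0 < lam := self_mem_nhdsWithin
  have hxC : x ∈ C := hC.mem_of_tendsto hx (hpos.mono fun lam hlam => (hu lam hlam).1)
  have hYx : ⟪Y, x⟫ = ⟪Y, u₀⟫ := le_antisymm (by simpa [regObjective] using hmax₀ hxC)
    (inner_le_of_tendsto_isMaxOn_regObjective hu hu₀ hx)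
  have hdist : ‖u₀ - x‖ ^ 2 ≤ ‖u₀‖ ^ 2 - ‖x‖ ^ 2 :=
    le_of_tendsto_of_tendsto ((tendsto_const_nhds.sub hx).norm.pow 2)
      (tendsto_const_nhds.sub (hx.norm.pow 2)) (hpos.mono fun lam hlam =>
        norm_sub_sq_le_of_isMaxOn_regObjective hCc le_rfl hlam hu₀ (hu lam hlam).1 hmax₀
          (hu lam hlam).2)
  have hx₀ : u₀ = x := sub_eq_zero.mp (norm_eq_zero.mp (by
    nlinarith [hmin₀ x hxC hYx, norm_nonneg u₀, norm_nonneg (u₀ - x)]))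
  rwa [hx₀]

end RegularizedMaximizer

section L2Transport

local notation "L²" => Lp (α := 𝕋) ℝ 2 volume

open Classical in
/-- The class in `L²(𝕋)` of a function, and `0` for a function that is not square integrable. -/
def toL2 (f : 𝕋 → ℝ) : L² := if hf : MemLp f 2 volume then hf.toLp f else 0

variable {f g : 𝕋 → ℝ}

lemma toL2_eq_toLp (hf : MemLp f 2 volume) : toL2 f = hf.toLp f := dif_pos hf

lemma coeFn_toL2 (hf : MemLp f 2 volume) : toL2 f =ᵐ[volume] f := by
  rw [toL2_eq_toLp hf]; exact hf.coeFn_toLp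

@[simp]
lemma toL2_coeFn (u : L²) : toL2 u = u := by
  rw [toL2_eq_toLp (Lp.memLp u), Lp.toLp_coeFn]

lemma toL2_sub (hf : MemLp f 2 volume) (hg : MemLp g 2 volume) :
    toL2 (f - g) = toL2 f - toL2 g := by
  rw [toL2_eq_toLp hf, toL2_eq_toLp hg, toL2_eq_toLp (hf.sub hg), MemLp.toLp_sub]

lemma integral_mul_eq_inner_toL2 (hf : MemLp f 2 volume) (hg : MemLp g 2 volume) :
    ∫ t, f t * g t = ⟪toL2 f, toL2 g⟫ := by
  rw [L2.inner_def]
  refine integral_congr_ae ?_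
  filter_upwards [coeFn_toL2 hf, coeFn_toL2 hg] with t hft hgt
  simp [hft, hgt, mul_comm]

lemma integral_sq_eq_norm_toL2_sq (hf : MemLp f 2 volume) : ∫ t, f t ^ 2 = ‖toL2 f‖ ^ 2 := by
  rw [← real_inner_self_eq_norm_sq, ← integral_mul_eq_inner_toL2 hf hf]
  simp only [sq]

lemma integral_sub_sq_eq_norm_toL2_sub_sq (hf : MemLp f 2 volume) (hg : MemLp g 2 volume) :
    ∫ t, (f t - g t) ^ 2 = ‖toL2 f - toL2 g‖ ^ 2 := by
  rw [← toL2_sub hf hg, ← integral_sq_eq_norm_toL2_sq (hf.sub hg)]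
  rfl

lemma L2norm_eq_norm_toL2 (hf : MemLp f 2 volume) : L2norm f = ‖toL2 f‖ := by
  rw [L2norm, integral_sq_eq_norm_toL2_sq hf, Real.sqrt_sq (norm_nonneg _)]

lemma dualObj_eq_regObjective {lam : ℝ} {y : 𝕋 → ℝ} (hy : MemLp y 2 volume)
    (hf : MemLp f 2 volume) : dualObj lam y f = regObjective (toL2 y) lam (toL2 f) := by
  rw [dualObj, dotL2, integral_mul_eq_inner_toL2 hy hf, integral_sq_eq_norm_toL2_sq hf,
    regObjective]

lemma phiStar_congr_ae (φ : 𝕋 → ℝ) (h : f =ᵐ[volume] g) : PhiStar φ f = PhiStar φ g :=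
  funext fun t => integral_congr_ae (h.mono fun x hx => congrArg (φ (t - x) * ·) hx)

lemma memLp_translate {ψ : 𝕋 → ℝ} (hψ : Continuous ψ) (t : 𝕋) :
    MemLp (fun x => ψ (t - x)) 2 volume :=
  (hψ.comp (continuous_const.sub continuous_id)).memLp_of_hasCompactSupport
    (HasCompactSupport.of_compactSpace _)

lemma phiStar_eq_inner {ψ : 𝕋 → ℝ} (hψ : Continuous ψ) (hf : MemLp f 2 volume) (t : 𝕋) :
    PhiStar ψ f t = ⟪toL2 (fun x => ψ (t - x)), toL2 f⟫ :=
  integral_mul_eq_inner_toL2 (memLp_translate hψ t) hf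

lemma exists_norm_toL2_translate_le {ψ : 𝕋 → ℝ} (hψ : Continuous ψ) :
    ∃ K, ∀ t : 𝕋, ‖toL2 (fun x => ψ (t - x))‖ ≤ K := by
  set Ψ : C(𝕋, ℝ) := ⟨ψ, hψ⟩
  refine ⟨measureUnivNNReal (volume : Measure 𝕋) ^ (2 : ENNReal).toReal⁻¹ * ‖Ψ‖, fun t => ?_⟩
  refine Lp.norm_le_of_ae_bound (norm_nonneg Ψ) ?_
  filter_upwards [coeFn_toL2 (memLp_translate hψ t)] with x hx
  rw [hx]
  exact Ψ.norm_coe_le_norm (t - x)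

/-- The feasible set `C` of the dual problems. -/
def admSet (φ : 𝕋 → ℝ) : Set L² := {u | DualAdm φ u}

lemma toL2_mem_admSet_iff {φ : 𝕋 → ℝ} (hf : MemLp f 2 volume) :
    toL2 f ∈ admSet φ ↔ DualAdm φ f := by
  simp only [admSet, Set.mem_ofPred_eq, DualAdm, phiStar_congr_ae φ (coeFn_toL2 hf), hf,
    Lp.memLp, true_and]

lemma admSet_eq_iInter {φ : 𝕋 → ℝ} (hφ : Continuous φ) :
    admSet φ = ⋂ t, innerSL ℝ (toL2 fun x => φ (t - x)) ⁻¹' Icc (-1) 1 := by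
  ext u
  simp [admSet, DualAdm, Lp.memLp, phiStar_eq_inner hφ (Lp.memLp u), abs_le]

lemma isClosed_admSet {φ : 𝕋 → ℝ} (hφ : Continuous φ) : IsClosed (admSet φ) := by
  rw [admSet_eq_iInter hφ]
  exact isClosed_iInter fun t => isClosed_Icc.preimage (ContinuousLinearMap.continuous _)

lemma convex_admSet {φ : 𝕋 → ℝ} (hφ : Continuous φ) : Convex ℝ (admSet φ) := by
  rw [admSet_eq_iInter hφ]
  exact convex_iInter fun t => (convex_Icc _ _).linear_preimage (innerSL ℝ _).toLinearMap

lemma SolvesDual.isMaxOn_toL2 {φ y p : 𝕋 → ℝ} {lam : ℝ} (hy : MemLp y 2 volume)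
    (h : SolvesDual φ lam y p) :
    toL2 p ∈ admSet φ ∧ IsMaxOn (regObjective (toL2 y) lam) (admSet φ) (toL2 p) := by
  refine ⟨(toL2_mem_admSet_iff h.1.1).2 h.1, fun v (hv : DualAdm φ v) => ?_⟩
  have hle := h.2 v hv
  rwa [dualObj_eq_regObjective hy (Lp.memLp v), dualObj_eq_regObjective hy h.1.1,
    toL2_coeFn] at hle

lemma minNormSol_toL2 {φ y p₀ : 𝕋 → ℝ} (hy : MemLp y 2 volume) (h : MinNormSol φ y p₀) :
    toL2 p₀ ∈ admSet φ ∧ IsMaxOn (fun v => ⟪toL2 y, v⟫) (admSet φ) (toL2 p₀) ∧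
      ∀ v ∈ admSet φ, ⟪toL2 y, v⟫ = ⟪toL2 y, toL2 p₀⟫ → ‖toL2 p₀‖ ≤ ‖v‖ := by
  obtain ⟨hadm, hmax, hmin⟩ := h
  have hdot : ∀ v : L², dotL2 y v = ⟪toL2 y, v⟫ := fun v => by
    rw [dotL2, integral_mul_eq_inner_toL2 hy (Lp.memLp v), toL2_coeFn]
  refine ⟨(toL2_mem_admSet_iff hadm.1).2 hadm, fun v (hv : DualAdm φ v) => ?_,
    fun v (hv : DualAdm φ v) hv₀ => ?_⟩
  · have := hmax v hv
    rwa [hdot, dotL2, integral_mul_eq_inner_toL2 hy hadm.1] at this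
  · have := hmin v hv (by rw [hdot, hv₀, dotL2, integral_mul_eq_inner_toL2 hy hadm.1])
    rwa [L2norm_eq_norm_toL2 hadm.1, L2norm_eq_norm_toL2 (Lp.memLp v), toL2_coeFn] at this

end L2Transport

section Certificates

open Function

lemma TendstoUniformly.congr {ι α β : Type*} [UniformSpace β] {F G : ι → α → β} {f : α → β}
    {l : Filter ι} (hF : TendstoUniformly F f l) (h : ∀ᶠ i in l, F i = G i) :
    TendstoUniformly G f l := by
  rw [tendstoUniformly_iff_tendstoUniformlyOnFilter] at hF ⊢
  exact hF.congr ((h.prod_inl _).mono fun n hn => congrFun hn n.2)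

lemma tendstoUniformly_inner_right {E ι α : Type*} [NormedAddCommGroup E] [InnerProductSpace ℝ E]
    {l : Filter ι} {k : α → E} {K : ℝ} (hk : ∀ t, ‖k t‖ ≤ K) {v : ι → E} {v₀ : E}
    (hv : Tendsto v l (𝓝 v₀)) :
    TendstoUniformly (fun i t => ⟪k t, v i⟫) (fun t => ⟪k t, v₀⟫) l := by
  rw [Metric.tendstoUniformly_iff]
  intro ε hε
  have hK : 0 < |K| + 1 := by positivity
  filter_upwards [(tendsto_iff_norm_sub_tendsto_zero.mp hv).eventually
    (gt_mem_nhds (div_pos hε hK))] with i hi t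
  calc dist ⟪k t, v₀⟫ ⟪k t, v i⟫ = |⟪k t, v i - v₀⟫| := by
        rw [Real.dist_eq, inner_sub_right, abs_sub_comm]
    _ ≤ ‖k t‖ * ‖v i - v₀‖ := abs_real_inner_le_norm _ _
    _ ≤ (|K| + 1) * ‖v i - v₀‖ := by gcongr; linarith [hk t, le_abs_self K]
    _ < (|K| + 1) * (ε / (|K| + 1)) := by gcongr
    _ = ε := by field_simp

lemma tendstoUniformly_phiStar {ψ : 𝕋 → ℝ} (hψ : Continuous ψ) {ι : Type*} {l : Filter ι}
    {p : ι → 𝕋 → ℝ} {p₀ : 𝕋 → ℝ} (hp : ∀ᶠ i in l, MemLp (p i) 2 volume)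
    (hp₀ : MemLp p₀ 2 volume) (h : Tendsto (fun i => toL2 (p i)) l (𝓝 (toL2 p₀))) :
    TendstoUniformly (fun i => PhiStar ψ (p i)) (PhiStar ψ p₀) l := by
  obtain ⟨K, hK⟩ := exists_norm_toL2_translate_le hψ
  rw [funext (phiStar_eq_inner hψ hp₀)]
  exact (tendstoUniformly_inner_right hK h).congr
    (hp.mono fun i hi => funext fun t => (phiStar_eq_inner hψ hi t).symm)

lemma continuous_of_continuous_lift {f : 𝕋 → ℝ} (h : Continuous (lift f)) : Continuous f :=
  (QuotientAddGroup.isQuotientMap_mk _).continuous_iff.mpr h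

lemma periodic_lift (f : 𝕋 → ℝ) : Periodic (lift f) 1 := fun s => by
  simp [lift]

lemma Function.Periodic.iteratedDeriv {𝕜 F : Type*} [NontriviallyNormedField 𝕜]
    [NormedAddCommGroup F] [NormedSpace 𝕜 F] {f : 𝕜 → F} {c : 𝕜} (h : Periodic f c) (k : ℕ) :
    Periodic (iteratedDeriv k f) c := by
  induction k with
  | zero => simpa using h
  | succ k ih =>
    intro x
    rw [iteratedDeriv_succ, ← deriv_comp_add_const, ih.funext]

def iteratedDerivT (k : ℕ) (φ : 𝕋 → ℝ) : 𝕋 → ℝ := ((periodic_lift φ).iteratedDeriv k).lift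

lemma lift_iteratedDerivT (k : ℕ) (φ : 𝕋 → ℝ) :
    lift (iteratedDerivT k φ) = iteratedDeriv k (lift φ) :=
  funext ((periodic_lift φ).iteratedDeriv k).lift_coe

lemma iteratedDerivT_zero (φ : 𝕋 → ℝ) : iteratedDerivT 0 φ = φ :=
  funext fun t => QuotientAddGroup.induction_on t
    (congrFun ((lift_iteratedDerivT 0 φ).trans iteratedDeriv_zero))

lemma continuous_iteratedDerivT {φ : 𝕋 → ℝ} {n : WithTop ℕ∞} (hφ : ContDiff ℝ n (lift φ))
    {k : ℕ} (hk : (k : WithTop ℕ∞) ≤ n) : Continuous (iteratedDerivT k φ) :=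
  continuous_of_continuous_lift (by
    rw [lift_iteratedDerivT]; exact hφ.continuous_iteratedDeriv k hk)

lemma integrable_translate_mul {c f : 𝕋 → ℝ} (hc : Continuous c) (hf : Integrable f volume)
    (t : 𝕋) : Integrable (fun x => c (t - x) * f x) volume :=
  hf.bdd_mul (hc.comp (continuous_const.sub continuous_id)).aestronglyMeasurable
    (Eventually.of_forall fun x => (⟨c, hc⟩ : C(𝕋, ℝ)).norm_coe_le_norm (t - x))

lemma hasDerivAt_lift_phiStar {a b : 𝕋 → ℝ} (hb : Continuous b)
    (hab : ∀ s, HasDerivAt (lift a) (lift b s) s) {f : 𝕋 → ℝ} (hf : Integrable f volume)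
    (s : ℝ) : HasDerivAt (lift (PhiStar a f)) (lift (PhiStar b f) s) s := by
  have ha : Continuous a := continuous_of_continuous_lift
    (continuous_iff_continuousAt.2 fun s => (hab s).continuousAt)
  have hmeas : ∀ c : 𝕋 → ℝ, Continuous c → ∀ s' : ℝ,
      AEStronglyMeasurable (fun x => c (s' - x) * f x) volume := fun c hc s' =>
    (hc.comp (continuous_const.sub continuous_id)).aestronglyMeasurable.mul hf.aestronglyMeasurable
  set B := ‖(⟨b, hb⟩ : C(𝕋, ℝ))‖
  refine (hasDerivAt_integral_of_dominated_loc_of_deriv_le (bound := fun x => B * ‖f x‖)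
    (F' := fun s' x => b (s' - x) * f x) univ_mem (Eventually.of_forall (hmeas a ha))
    (integrable_translate_mul ha hf s) (hmeas b hb s) ?_ (hf.norm.const_mul B) ?_).2
  · refine Eventually.of_forall fun x s' _ => ?_
    rw [norm_mul]
    gcongr
    exact (⟨b, hb⟩ : C(𝕋, ℝ)).norm_coe_le_norm _
  · refine Eventually.of_forall fun x s' _ => QuotientAddGroup.induction_on x fun r => ?_
    exact (HasDerivAt.comp_sub_const s' r (hab (s' - r))).mul_const (f r)

lemma iteratedDeriv_lift_phiStar {φ f : 𝕋 → ℝ} {n : WithTop ℕ∞} (hφ : ContDiff ℝ n (lift φ))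
    (hf : Integrable f volume) {k : ℕ} (hk : (k : WithTop ℕ∞) ≤ n) :
    iteratedDeriv k (lift (PhiStar φ f)) = lift (PhiStar (iteratedDerivT k φ) f) := by
  induction k with
  | zero => simp [iteratedDerivT_zero]
  | succ k ih =>
    have hk' : (k : WithTop ℕ∞) < n := lt_of_lt_of_le (by exact_mod_cast k.lt_succ_self) hk
    rw [iteratedDeriv_succ, ih hk'.le]
    funext s
    refine (hasDerivAt_lift_phiStar (continuous_iteratedDerivT hφ hk) (fun s => ?_) hf s).deriv
    rw [lift_iteratedDerivT, lift_iteratedDerivT, iteratedDeriv_succ]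
    exact (hφ.differentiable_iteratedDeriv k hk' s).hasDerivAt

end Certificates

/-- Convergence of dual certificates: as `λ → 0⁺`, the solutions `p_λ` of `D_λ(y)` converge
strongly in `L²(𝕋)` to the minimal-norm solution `p₀` of `D₀(y)`, and the certificates
`η_λ = Φ*p_λ` together with their first and second derivatives converge uniformly to
`η₀ = Φ*p₀` and its derivatives. -/
theorem dual_certificate_convergence (φ : 𝕋 → ℝ) (hφ : ContDiff ℝ 2 (lift φ))
    (y : 𝕋 → ℝ) (hy : MemLp y 2 volume)
    (p : ℝ → 𝕋 → ℝ) (hp : ∀ lam : ℝ, 0 < lam → SolvesDual φ lam y (p lam))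
    (p₀ : 𝕋 → ℝ) (hp₀ : MinNormSol φ y p₀) :
    Filter.Tendsto (fun lam => ∫ t, (p lam t - p₀ t) ^ 2)
        (nhdsWithin 0 (Set.Ioi 0)) (nhds 0) ∧
      ∀ k : ℕ, k ≤ 2 →
        TendstoUniformly (fun lam => iteratedDeriv k (lift (PhiStar φ (p lam))))
          (iteratedDeriv k (lift (PhiStar φ p₀))) (nhdsWithin 0 (Set.Ioi 0)) := by
  have hφc : Continuous φ := continuous_of_continuous_lift hφ.continuous
  have hmem : ∀ᶠ lam in 𝓝[>] 0, MemLp (p lam) 2 volume :=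
    eventually_nhdsWithin_of_forall fun lam hlam => (hp lam hlam).1.1
  obtain ⟨hadm₀, hmax₀, hmin₀⟩ := minNormSol_toL2 hy hp₀
  have hL2 : Tendsto (fun lam => toL2 (p lam)) (𝓝[>] 0) (𝓝 (toL2 p₀)) :=
    tendsto_isMaxOn_regObjective (isClosed_admSet hφc) (convex_admSet hφc)
      (fun lam hlam => (hp lam hlam).isMaxOn_toL2 hy) hadm₀ hmax₀ hmin₀
  refine ⟨?_, fun k hk => ?_⟩
  · have hsq := (hL2.sub_const (toL2 p₀)).norm.pow 2
    rw [sub_self, norm_zero, zero_pow two_ne_zero] at hsq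
    exact hsq.congr' (hmem.mono fun lam h => (integral_sub_sq_eq_norm_toL2_sub_sq h hp₀.1.1).symm)
  · have hk' : (k : WithTop ℕ∞) ≤ 2 := by exact_mod_cast hk
    rw [iteratedDeriv_lift_phiStar hφ (hp₀.1.1.integrable one_le_two) hk']
    refine ((tendstoUniformly_phiStar (continuous_iteratedDerivT hφ hk') hmem hp₀.1.1 hL2).comp
      ((↑) : ℝ → 𝕋)).congr ?_
    filter_upwards [hmem] with lam h
    exact (iteratedDeriv_lift_phiStar hφ (h.integrable one_le_two) hk').symm
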